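/- Concordance representation: let ν be the Markov product law of (X, Y) on ℝ². Then α(X) · Λ(Y|X) = (ν ⊗ ν){ ((y₁, y₁'), (y₂, y₂')) ∈ ℝ² × ℝ² : (y₁ − y₂)(y₁' − y₂') > 0 } − (ν ⊗ ν){ ((y₁, y₁'), (y₂, y₂')) ∈ ℝ² × ℝ² : (y₁ − y₂)(y₁' − y₂') < 0 }. -/

import Mathlib

open MeasureTheory ProbabilityTheory Set Filter Topology

/-- The (nonparametric) relative effect `Ψ(μ, ν) = ∫ μ((-∞,y)) + (1/2) μ({y}) dν(y)`. -/
noncomputable def relEffect (μ ν : Measure ℝ) : ℝ :=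
  ∫ y, ((μ (Set.Iio y)).toReal + (1 / 2) * (μ {y}).toReal) ∂ν

/-- `α(μ) = 1 - ∫ μ({x}) dμ(x) = 1 - P(X = X*)`, the non-discrete mass of `μ`. -/
noncomputable def alphaCoeff {E : Type*} [MeasurableSpace E] (μ : Measure E) : ℝ :=
  1 - ∫ x, (μ {x}).toReal ∂μ

/-- The coefficient of separation `Λ(Y|X)`. -/
noncomputable def sepCoeff {Ω E : Type*} [MeasurableSpace Ω] [MeasurableSpace E]
    (P : Measure Ω) [IsFiniteMeasure P] (Y : Ω → ℝ) (X : Ω → E) : ℝ :=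
  (alphaCoeff (P.map X))⁻¹ *
    ∫ x : E × E,
      (relEffect (condDistrib Y X P x.1) (condDistrib Y X P x.2)
        - relEffect (condDistrib Y X P x.2) (condDistrib Y X P x.1)) ^ 2
      ∂((P.map X).prod (P.map X))

/-- A random variable is non-degenerate if it is not a.s. constant. -/
def Nondegenerate {Ω α : Type*} [MeasurableSpace Ω] (P : Measure Ω) (Z : Ω → α) : Prop :=
  ¬ ∃ c, ∀ᵐ ω ∂P, Z ω = c

/-- The Markov product law of `(X, Y)`: the law on `ℝ²` of a pair `(Y, Y')` that is
conditionally i.i.d. given `X`, i.e. `ν(B) = ∫ (κ(x) ⊗ κ(x))(B) dμ_X(x)`. -/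
noncomputable def markovProd {Ω E : Type*} [MeasurableSpace Ω] [MeasurableSpace E]
    (P : Measure Ω) [IsFiniteMeasure P] (Y : Ω → ℝ) (X : Ω → E) : Measure (ℝ × ℝ) :=
  (P.map X).bind fun x => (condDistrib Y X P x).prod (condDistrib Y X P x)

/-!
Write `a = (κ(x₁) ⊗ κ(x₂)){y₁ < y₂}` and `b = (κ(x₁) ⊗ κ(x₂)){y₂ < y₁}`. Ties contribute equally
to `Ψ(κ(x₁), κ(x₂))` and `Ψ(κ(x₂), κ(x₁))`, so these differ by `a - b`. Given `(X, X*) = (x₁, x₂)`,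
regrouping `((Y₁, Y₁'), (Y₂, Y₂'))` as `((Y₁, Y₂), (Y₁', Y₂'))` turns it into two independent draws
from `κ(x₁) ⊗ κ(x₂)`, so concordance has probability `a² + b²` and discordance `2ab`, whose difference
is `(a - b)²`. Integrating over `μ_X ⊗ μ_X` gives `∫ (Ψ - Ψ*)²`, and `α(X) ≠ 0` because `X` is not
a.s. constant.
-/

section Slices

variable {α β : Type*} [MeasurableSpace α] [MeasurableSpace β]
  {μ : Measure α} {ν : Measure β} [IsFiniteMeasure μ] [IsFiniteMeasure ν]
  {s : Set (α × β)}

lemma integrable_measureReal_prodMk_right (hs : MeasurableSet s) :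
    Integrable (fun y => μ.real ((·, y) ⁻¹' s)) ν :=
  integrable_toReal_of_lintegral_ne_top (measurable_measure_prodMk_right hs).aemeasurable <| by
    rw [← Measure.prod_apply_symm hs]; exact measure_ne_top _ _

lemma integral_measureReal_prodMk_right (hs : MeasurableSet s) :
    ∫ y, μ.real ((·, y) ⁻¹' s) ∂ν = (μ.prod ν).real s := by
  rw [measureReal_def, Measure.prod_apply_symm hs, ← integral_toReal
    (measurable_measure_prodMk_right hs).aemeasurable (ae_of_all _ fun _ => measure_lt_top _ _)]
  rfl

end Slices

section Kernels

variable {α β : Type*} [MeasurableSpace α] [MeasurableSpace β]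
  {μ : Measure α} {κ : Kernel α β} [IsFiniteKernel κ] {s : Set β}

lemma integrable_measureReal_kernel [IsFiniteMeasure μ] (hs : MeasurableSet s) :
    Integrable (fun x => (κ x).real s) μ :=
  integrable_toReal_of_lintegral_ne_top (κ.measurable_coe hs).aemeasurable <| by
    rw [← Measure.bind_apply hs κ.aemeasurable]; exact measure_ne_top _ _

lemma measureReal_comp_apply (hs : MeasurableSet s) :
    (κ ∘ₘ μ).real s = ∫ x, (κ x).real s ∂μ := by
  rw [measureReal_def, Measure.bind_apply hs κ.aemeasurable, ← integral_toReal
    (κ.measurable_coe hs).aemeasurable (ae_of_all _ fun _ => measure_lt_top _ _)]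
  rfl

end Kernels

lemma MeasureTheory.Measure.prod_comp_eq_parallelComp_comp {α β γ δ : Type*} [MeasurableSpace α]
    [MeasurableSpace β] [MeasurableSpace γ] [MeasurableSpace δ] {μ : Measure α} {ν : Measure γ}
    [SFinite μ] [SFinite ν] {κ : Kernel α β} {η : Kernel γ δ} [IsSFiniteKernel κ]
    [IsSFiniteKernel η] :
    (κ ∘ₘ μ).prod (η ∘ₘ ν) = (κ ∥ₖ η) ∘ₘ (μ.prod ν) := by
  rw [Measure.prod_comp_left, Measure.prod_comp_right, Measure.comp_assoc,
    Kernel.parallelComp_comp_parallelComp, Kernel.comp_id, Kernel.id_comp]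

lemma measurable_prodProdProdComm {α β γ δ : Type*} [MeasurableSpace α] [MeasurableSpace β]
    [MeasurableSpace γ] [MeasurableSpace δ] : Measurable (Equiv.prodProdProdComm α β γ δ) :=
  (measurable_fst.fst.prodMk measurable_snd.fst).prodMk
    (measurable_fst.snd.prodMk measurable_snd.snd)

lemma measure_prodProdProdComm_preimage_prod {α β : Type*} [MeasurableSpace α]
    [MeasurableSpace β] (μ : Measure α) (ν : Measure β) [SFinite μ] [SFinite ν]
    {A B : Set (α × β)} (hA : MeasurableSet A) (hB : MeasurableSet B) :
    ((μ.prod μ).prod (ν.prod ν)) (Equiv.prodProdProdComm α α β β ⁻¹' (A ×ˢ B))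
      = (μ.prod ν) A * (μ.prod ν) B := by
  have hslice : ∀ a : α × α, Prod.mk a ⁻¹' (Equiv.prodProdProdComm α α β β ⁻¹' (A ×ˢ B))
      = (Prod.mk a.1 ⁻¹' A) ×ˢ (Prod.mk a.2 ⁻¹' B) := fun _ => rfl
  rw [Measure.prod_apply (measurable_prodProdProdComm (hA.prod hB))]
  simp_rw [hslice, Measure.prod_prod]
  rw [lintegral_prod_mul (measurable_measure_prodMk_left hA).aemeasurable
    (measurable_measure_prodMk_left hB).aemeasurable, ← Measure.prod_apply hA,
    ← Measure.prod_apply hB]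

lemma exists_measure_singleton_eq_one_of_alphaCoeff_eq_zero {E : Type*} [MeasurableSpace E]
    {μ : Measure E} [IsProbabilityMeasure μ] (h : alphaCoeff μ = 0) : ∃ x, μ {x} = 1 := by
  simp only [alphaCoeff, ← measureReal_def] at h
  have hint : Integrable (fun x => μ.real {x}) μ := by
    by_contra hint
    rw [integral_undef hint] at h
    norm_num at h
  have hzero : ∫ x, (1 - μ.real {x}) ∂μ = 0 := by
    rw [integral_sub (integrable_const 1) hint]
    simpa using h
  obtain ⟨x, hx⟩ := ((integral_eq_zero_iff_of_nonneg (fun _ => sub_nonneg.2 measureReal_le_one)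
    ((integrable_const 1).sub hint)).1 hzero).exists
  exact ⟨x, (ENNReal.toReal_eq_one_iff _).1 (sub_eq_zero.1 hx).symm⟩

lemma Nondegenerate.of_comp {Ω α β : Type*} [MeasurableSpace Ω] {P : Measure Ω} {Z : Ω → α}
    {f : α → β} (h : Nondegenerate P (f ∘ Z)) : Nondegenerate P Z :=
  fun ⟨c, hc⟩ => h ⟨f c, hc.mono fun _ hω => congrArg f hω⟩

lemma alphaCoeff_map_ne_zero {Ω E : Type*} [MeasurableSpace Ω] [MeasurableSpace E]
    [MeasurableSingletonClass E] {P : Measure Ω} [IsProbabilityMeasure P] {X : Ω → E}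
    (hX : AEMeasurable X P) (hnd : Nondegenerate P X) : alphaCoeff (P.map X) ≠ 0 := by
  intro h
  have := Measure.isProbabilityMeasure_map hX
  obtain ⟨x, hx⟩ := exists_measure_singleton_eq_one_of_alphaCoeff_eq_zero h
  exact hnd ⟨x, (ae_map_iff hX (measurableSet_singleton x)).1
    ((prob_compl_eq_zero_iff (measurableSet_singleton x)).2 hx)⟩

def concordantPairs : Set ((ℝ × ℝ) × (ℝ × ℝ)) := {q | 0 < (q.1.1 - q.2.1) * (q.1.2 - q.2.2)}

def discordantPairs : Set ((ℝ × ℝ) × (ℝ × ℝ)) := {q | (q.1.1 - q.2.1) * (q.1.2 - q.2.2) < 0}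

lemma measurableSet_concordantPairs : MeasurableSet concordantPairs :=
  measurableSet_lt measurable_const (by fun_prop)

lemma measurableSet_discordantPairs : MeasurableSet discordantPairs :=
  measurableSet_lt (by fun_prop) measurable_const

section RelativeEffects

variable {μ₁ μ₂ : Measure ℝ} [IsFiniteMeasure μ₁] [IsFiniteMeasure μ₂]

lemma relEffect_eq_measureReal_prod :
    relEffect μ₁ μ₂
      = (μ₁.prod μ₂).real {p | p.1 < p.2} + 1 / 2 * (μ₁.prod μ₂).real {p | p.1 = p.2} := by
  have heq : MeasurableSet {p : ℝ × ℝ | p.1 = p.2} :=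
    measurableSet_eq_fun measurable_fst measurable_snd
  rw [← integral_measureReal_prodMk_right measurableSet_lt',
    ← integral_measureReal_prodMk_right heq, ← integral_const_mul,
    ← integral_add (integrable_measureReal_prodMk_right measurableSet_lt')
      ((integrable_measureReal_prodMk_right heq).const_mul _)]
  rfl

lemma relEffect_swap_eq_measureReal_prod :
    relEffect μ₂ μ₁
      = (μ₁.prod μ₂).real {p | p.2 < p.1} + 1 / 2 * (μ₁.prod μ₂).real {p | p.1 = p.2} := by
  rw [relEffect_eq_measureReal_prod, ← Measure.prod_swap,
    map_measureReal_apply measurable_swap measurableSet_lt',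
    map_measureReal_apply measurable_swap (measurableSet_eq_fun measurable_fst measurable_snd)]
  simp only [preimage_ofPred_eq, Prod.fst_swap, Prod.snd_swap, eq_comm]

lemma measureReal_prodProdProdComm_preimage_union_prod {A B C D : Set (ℝ × ℝ)}
    (hA : MeasurableSet A) (hB : MeasurableSet B) (hC : MeasurableSet C) (hD : MeasurableSet D)
    (hdisj : Disjoint (A ×ˢ B) (C ×ˢ D)) :
    ((μ₁.prod μ₁).prod (μ₂.prod μ₂)).real
        (Equiv.prodProdProdComm ℝ ℝ ℝ ℝ ⁻¹' (A ×ˢ B ∪ C ×ˢ D))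
      = (μ₁.prod μ₂).real A * (μ₁.prod μ₂).real B
        + (μ₁.prod μ₂).real C * (μ₁.prod μ₂).real D := by
  rw [preimage_union, measureReal_union (hdisj.preimage _)
    (measurable_prodProdProdComm (hC.prod hD))]
  simp only [measureReal_def, measure_prodProdProdComm_preimage_prod _ _ hA hB,
    measure_prodProdProdComm_preimage_prod _ _ hC hD, ENNReal.toReal_mul]

lemma measureReal_concordantPairs :
    ((μ₁.prod μ₁).prod (μ₂.prod μ₂)).real concordantPairs
      = (μ₁.prod μ₂).real {p | p.2 < p.1} ^ 2 + (μ₁.prod μ₂).real {p | p.1 < p.2} ^ 2 := by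
  have hgt : MeasurableSet {p : ℝ × ℝ | p.2 < p.1} := measurableSet_lt measurable_snd measurable_fst
  have hset : concordantPairs = Equiv.prodProdProdComm ℝ ℝ ℝ ℝ ⁻¹'
      ({p | p.2 < p.1} ×ˢ {p | p.2 < p.1} ∪ {p | p.1 < p.2} ×ˢ {p | p.1 < p.2}) := by
    ext q
    simp [concordantPairs, mul_pos_iff, sub_pos, sub_neg]
  rw [hset, measureReal_prodProdProdComm_preimage_union_prod hgt hgt measurableSet_lt'
    measurableSet_lt', sq, sq]
  exact disjoint_prod.2 <| .inl <| disjoint_left.2 fun p (h : p.2 < p.1) h' => lt_asymm h h'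

lemma measureReal_discordantPairs :
    ((μ₁.prod μ₁).prod (μ₂.prod μ₂)).real discordantPairs
      = 2 * (μ₁.prod μ₂).real {p | p.2 < p.1} * (μ₁.prod μ₂).real {p | p.1 < p.2} := by
  have hgt : MeasurableSet {p : ℝ × ℝ | p.2 < p.1} := measurableSet_lt measurable_snd measurable_fst
  have hset : discordantPairs = Equiv.prodProdProdComm ℝ ℝ ℝ ℝ ⁻¹'
      ({p | p.2 < p.1} ×ˢ {p | p.1 < p.2} ∪ {p | p.1 < p.2} ×ˢ {p | p.2 < p.1}) := by
    ext q
    simp [discordantPairs, mul_neg_iff, sub_pos, sub_neg]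
  rw [hset, measureReal_prodProdProdComm_preimage_union_prod hgt measurableSet_lt'
    measurableSet_lt' hgt]
  · ring
  exact disjoint_prod.2 <| .inl <| disjoint_left.2 fun p (h : p.2 < p.1) h' => lt_asymm h h'

lemma measureReal_concordantPairs_sub_discordantPairs_prod_prod :
    ((μ₁.prod μ₁).prod (μ₂.prod μ₂)).real concordantPairs
        - ((μ₁.prod μ₁).prod (μ₂.prod μ₂)).real discordantPairs
      = (relEffect μ₁ μ₂ - relEffect μ₂ μ₁) ^ 2 := by
  rw [measureReal_concordantPairs, measureReal_discordantPairs, relEffect_eq_measureReal_prod,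
    relEffect_swap_eq_measureReal_prod]
  ring

end RelativeEffects

lemma measureReal_concordantPairs_sub_discordantPairs_comp {E : Type*} [MeasurableSpace E]
    (μ : Measure E) [IsFiniteMeasure μ] (κ : Kernel E ℝ) [IsFiniteKernel κ] :
    (((κ ×ₖ κ) ∘ₘ μ).prod ((κ ×ₖ κ) ∘ₘ μ)).real concordantPairs
        - (((κ ×ₖ κ) ∘ₘ μ).prod ((κ ×ₖ κ) ∘ₘ μ)).real discordantPairs
      = ∫ x, (relEffect (κ x.1) (κ x.2) - relEffect (κ x.2) (κ x.1)) ^ 2 ∂(μ.prod μ) := by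
  rw [Measure.prod_comp_eq_parallelComp_comp, measureReal_comp_apply measurableSet_concordantPairs,
    measureReal_comp_apply measurableSet_discordantPairs,
    ← integral_sub (integrable_measureReal_kernel measurableSet_concordantPairs)
      (integrable_measureReal_kernel measurableSet_discordantPairs)]
  congr 1 with x
  rw [Kernel.parallelComp_apply, Kernel.prod_apply, Kernel.prod_apply,
    measureReal_concordantPairs_sub_discordantPairs_prod_prod]

theorem alpha_mul_sepCoeff_eq_concordance_general
    {Ω : Type*} [MeasurableSpace Ω] {p : ℕ}
    (P : Measure Ω) [IsProbabilityMeasure P]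
    (X : Ω → (Fin p → ℝ)) (Y : Ω → ℝ)
    (hX : Measurable X)
    (hXnd : ∃ k, Nondegenerate P fun ω => X ω k) :
    alphaCoeff (P.map X) * sepCoeff P Y X
      = (((markovProd P Y X).prod (markovProd P Y X))
          {q : (ℝ × ℝ) × (ℝ × ℝ) | 0 < (q.1.1 - q.2.1) * (q.1.2 - q.2.2)}).toReal
      - (((markovProd P Y X).prod (markovProd P Y X))
          {q : (ℝ × ℝ) × (ℝ × ℝ) | (q.1.1 - q.2.1) * (q.1.2 - q.2.2) < 0}).toReal := by
  obtain ⟨k, hk⟩ := hXnd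
  have hα : alphaCoeff (P.map X) ≠ 0 :=
    alphaCoeff_map_ne_zero hX.aemeasurable (Nondegenerate.of_comp (f := fun x => x k) hk)
  have hν : markovProd P Y X = (condDistrib Y X P ×ₖ condDistrib Y X P) ∘ₘ P.map X := by
    rw [markovProd]
    congr 1 with x : 1
    rw [Kernel.prod_apply]
  rw [sepCoeff, ← mul_assoc, mul_inv_cancel₀ hα, one_mul, hν,
    ← measureReal_concordantPairs_sub_discordantPairs_comp]
  rfl

/-- Concordance representation: `α(X)·Λ(Y|X)` equals the probability of concordance minus
the probability of discordance of two independent copies of the Markov product of `(X, Y)`. -/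
theorem alpha_mul_sepCoeff_eq_concordance
    {Ω : Type*} [MeasurableSpace Ω] {p : ℕ} (hp : 1 ≤ p)
    (P : Measure Ω) [IsProbabilityMeasure P]
    (X : Ω → (Fin p → ℝ)) (Y : Ω → ℝ)
    (hX : Measurable X) (hY : Measurable Y)
    (hXnd : ∃ k, Nondegenerate P fun ω => X ω k)
    (hYnd : Nondegenerate P Y) :
    alphaCoeff (P.map X) * sepCoeff P Y X
      = (((markovProd P Y X).prod (markovProd P Y X))
          {q : (ℝ × ℝ) × (ℝ × ℝ) | 0 < (q.1.1 - q.2.1) * (q.1.2 - q.2.2)}).toReal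
      - (((markovProd P Y X).prod (markovProd P Y X))
          {q : (ℝ × ℝ) × (ℝ × ℝ) | (q.1.1 - q.2.1) * (q.1.2 - q.2.2) < 0}).toReal :=
  alpha_mul_sepCoeff_eq_concordance_general P X Y hX hXnd
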